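/- arXiv:2508.20956 — 2 statements merged into one kernel-verified Lean document; each statement's English description precedes it below -/
import Mathlib

section
/- There exists a bounded operator C : K → H such that the operator matrix M_C = [[A, C],[0, B]] is Fredholm right invertible (surjective with finite-dimensional kernel) if and only if B is surjective, A is upper semi-Fredholm, and either dim coker(A) ≤ dim ker(B) < ∞ or dim ker(B) = dim coker(A) = ∞. -/
open ContinuousLinearMap Cardinal

noncomputable section

universe u

/-- nullity: dimension of the kernel, as a cardinal -/
def alphaDim {E F : Type u} [NormedAddCommGroup E] [NormedSpace ℂ E]
    [NormedAddCommGroup F] [NormedSpace ℂ F] (T : E →L[ℂ] F) : Cardinal :=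
  Module.rank ℂ (LinearMap.ker (T : E →ₗ[ℂ] F))

/-- deficiency: dimension of the cokernel, as a cardinal -/
def betaDim {E F : Type u} [NormedAddCommGroup E] [NormedSpace ℂ E]
    [NormedAddCommGroup F] [NormedSpace ℂ F] (T : E →L[ℂ] F) : Cardinal :=
  Module.rank ℂ (F ⧸ LinearMap.range (T : E →ₗ[ℂ] F))

/-- the upper triangular operator matrix [[A, C],[0, B]] acting on H ⊕ K -/
def MC {H K : Type u} [NormedAddCommGroup H] [NormedSpace ℂ H]
    [NormedAddCommGroup K] [NormedSpace ℂ K]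
    (A : H →L[ℂ] H) (B : K →L[ℂ] K) (C : K →L[ℂ] H) : (H × K) →L[ℂ] (H × K) :=
  (A.comp (fst ℂ H K) + C.comp (snd ℂ H K)).prod (B.comp (snd ℂ H K))

/-- T - λ -/
def shf {E : Type u} [NormedAddCommGroup E] [NormedSpace ℂ E]
    (T : E →L[ℂ] E) (l : ℂ) : E →L[ℂ] E := T - l • ContinuousLinearMap.id ℂ E

/-- Fredholm left invertible spectrum -/
def sigmaFLI {E : Type u} [NormedAddCommGroup E] [NormedSpace ℂ E]
    (T : E →L[ℂ] E) : Set ℂ :=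
  {l | ¬ (Function.Injective (shf T l) ∧ betaDim (shf T l) < ℵ₀)}

/-- Fredholm right invertible spectrum -/
def sigmaFRI {E : Type u} [NormedAddCommGroup E] [NormedSpace ℂ E]
    (T : E →L[ℂ] E) : Set ℂ :=
  {l | ¬ (Function.Surjective (shf T l) ∧ alphaDim (shf T l) < ℵ₀)}

/-- polynomially convex hull: the set together with the bounded components of its complement -/
def polyHull (S : Set ℂ) : Set ℂ :=
  S ∪ {z | z ∉ S ∧ Bornology.IsBounded (connectedComponentIn Sᶜ z)}

variable {H K : Type u}
  [NormedAddCommGroup H] [InnerProductSpace ℂ H] [CompleteSpace H]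
  [NormedAddCommGroup K] [InnerProductSpace ℂ K] [CompleteSpace K]


/-!
If `M_C` is onto with finite-dimensional kernel, then `B` is onto, `ker A × 0 ⊆ ker M_C`, and the
second components `N = {y ∈ ker B | C y ∈ range A}` of `ker M_C` form a finite-dimensional space.
Since `M_C` is an open map and `H × N` is a closed subspace containing `ker M_C`, its image
`range A × 0` is closed. The map `y ↦ [C y]` sends `ker B` onto `H ⧸ range A` with kernel `N`, so
`α(B) = β(A) + dim N`, which forces the dichotomy on `α(B)` and `β(A)`.

Conversely, let `W = (range A)ᗮ`, so `dim W = β(A)`, and pick a bounded surjection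
`D : ker B → W` with finite-dimensional kernel: any linear surjection when `ker B` is
finite-dimensional, a unitary when both spaces are separable and infinite-dimensional. For
`C = D ∘ P_{ker B}` the operator `M_C` is onto and `ker M_C ≅ ker A × ker D`.
-/

open TopologicalSpace

theorem Cardinal.le_and_lt_aleph0_or_aleph0_le_of_add_eq {a b n : Cardinal} (h : a + n = b)
    (hn : n < ℵ₀) : (a ≤ b ∧ b < ℵ₀) ∨ (ℵ₀ ≤ b ∧ ℵ₀ ≤ a) := by
  rcases lt_or_ge b ℵ₀ with hb | hb
  · exact .inl ⟨h ▸ self_le_add_right a n, hb⟩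
  · refine .inr ⟨hb, not_lt.mp fun ha => ?_⟩
    exact (h ▸ add_lt_aleph0 ha hn).not_ge hb

theorem LinearMap.exists_surjective_of_rank_le {K : Type*} {V W : Type u} [DivisionRing K]
    [AddCommGroup V] [Module K V] [AddCommGroup W] [Module K W]
    (h : Module.rank K W ≤ Module.rank K V) : ∃ f : V →ₗ[K] W, Function.Surjective f := by
  let b := Module.Basis.ofVectorSpace K V
  obtain ⟨g, hg⟩ := Module.Free.exists_linearMap_injective_of_linearIndependent_of_rank_le
    b.linearIndependent (b.mk_eq_rank''.symm ▸ h)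
  obtain ⟨f, hf⟩ := g.exists_leftInverse_of_injective (LinearMap.ker_eq_bot.mpr hg)
  exact ⟨f, fun w => ⟨g w, LinearMap.congr_fun hf w⟩⟩

theorem ContinuousLinearMap.isClosed_image_of_ker_le {𝕜 E F : Type*}
    [NontriviallyNormedField 𝕜] [NormedAddCommGroup E] [NormedSpace 𝕜 E] [CompleteSpace E]
    [NormedAddCommGroup F] [NormedSpace 𝕜 F] [CompleteSpace F]
    (T : E →L[𝕜] F) (hT : Function.Surjective T) {M : Submodule 𝕜 E}
    (hM : IsClosed (M : Set E)) (hker : LinearMap.ker (T : E →ₗ[𝕜] F) ≤ M) :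
    IsClosed (T '' M) := by
  have hq := (T.isOpenMap hT).isQuotientMap T.continuous hT
  have hsat : (T : E → F) ⁻¹' (T '' M) = M := by
    have := congrArg ((↑) : Submodule 𝕜 E → Set E) (Submodule.comap_map_eq (T : E →ₗ[𝕜] F) M)
    simpa [sup_eq_left.mpr hker] using this
  rwa [← hq.isCoinducing.isClosed_preimage, hsat]

section SeparableHilbert

variable {𝕜 E : Type*} [RCLike 𝕜] [NormedAddCommGroup E] [InnerProductSpace 𝕜 E]

theorem Orthonormal.countable [SeparableSpace E] {ι : Type*} {v : ι → E}
    (hv : Orthonormal 𝕜 v) : Countable ι := by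
  refine Pairwise.countable_of_isOpen_disjoint (s := fun i => Metric.ball (v i) (1 / 2))
    (fun i j hij => Metric.ball_disjoint_ball ?_) (fun _ => Metric.isOpen_ball)
    (fun _ => Metric.nonempty_ball.2 (by norm_num))
  have : ‖v i - v j‖ ^ 2 = 2 := by
    rw [@norm_sub_sq 𝕜, hv.1 i, hv.1 j, hv.2 hij]
    norm_num
  rw [dist_eq_norm]
  nlinarith [norm_nonneg (v i - v j)]

theorem nonempty_hilbertBasis_nat [CompleteSpace E] [SeparableSpace E]
    (h : ¬ FiniteDimensional 𝕜 E) : Nonempty (HilbertBasis ℕ 𝕜 E) := by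
  obtain ⟨w, b, -⟩ := exists_hilbertBasis 𝕜 E
  have : Countable w := b.orthonormal.countable
  have : Infinite w := by
    by_contra hfin
    have : Fintype w := @Fintype.ofFinite w (not_infinite_iff_finite.mp hfin)
    exact h b.toOrthonormalBasis.toBasis.finiteDimensional_of_finite
  obtain ⟨e⟩ : Nonempty (ℕ ≃ w) := inferInstance
  refine ⟨HilbertBasis.mk (b.orthonormal.comp e e.injective) ?_⟩
  rw [Set.range_comp, e.range_eq_univ, Set.image_univ, b.dense_span]

theorem nonempty_linearIsometryEquiv_of_not_finiteDimensional {F : Type*}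
    [NormedAddCommGroup F] [InnerProductSpace 𝕜 F] [CompleteSpace E] [SeparableSpace E]
    [CompleteSpace F] [SeparableSpace F]
    (hE : ¬ FiniteDimensional 𝕜 E) (hF : ¬ FiniteDimensional 𝕜 F) : Nonempty (E ≃ₗᵢ[𝕜] F) := by
  obtain ⟨b⟩ := nonempty_hilbertBasis_nat hE
  obtain ⟨c⟩ := nonempty_hilbertBasis_nat hF
  exact ⟨b.repr.trans c.repr.symm⟩

end SeparableHilbert

theorem alphaDim_lt_aleph0_iff {E F : Type u} [NormedAddCommGroup E] [NormedSpace ℂ E]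
    [NormedAddCommGroup F] [NormedSpace ℂ F] (T : E →L[ℂ] F) :
    alphaDim T < ℵ₀ ↔ FiniteDimensional ℂ (LinearMap.ker (T : E →ₗ[ℂ] F)) :=
  Module.rank_lt_aleph0_iff

theorem exists_surjective_finiteDimensional_ker {V W : Type u}
    [NormedAddCommGroup V] [InnerProductSpace ℂ V] [CompleteSpace V] [SeparableSpace V]
    [NormedAddCommGroup W] [InnerProductSpace ℂ W] [CompleteSpace W] [SeparableSpace W]
    (h : (Module.rank ℂ W ≤ Module.rank ℂ V ∧ Module.rank ℂ V < ℵ₀) ∨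
      (ℵ₀ ≤ Module.rank ℂ V ∧ ℵ₀ ≤ Module.rank ℂ W)) :
    ∃ D : V →L[ℂ] W, Function.Surjective D ∧
      FiniteDimensional ℂ (LinearMap.ker (D : V →ₗ[ℂ] W)) := by
  rcases h with ⟨hWV, hV⟩ | ⟨hV, hW⟩
  · have : FiniteDimensional ℂ V := Module.rank_lt_aleph0_iff.mp hV
    obtain ⟨f, hf⟩ := LinearMap.exists_surjective_of_rank_le hWV
    exact ⟨LinearMap.toContinuousLinearMap f, hf, by infer_instance⟩
  · obtain ⟨U⟩ := nonempty_linearIsometryEquiv_of_not_finiteDimensional (𝕜 := ℂ)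
      (fun hfin => hV.not_gt (Module.rank_lt_aleph0_iff.mpr hfin))
      (fun hfin => hW.not_gt (Module.rank_lt_aleph0_iff.mpr hfin))
    let D : V →L[ℂ] W := U.toContinuousLinearEquiv
    have hD : LinearMap.ker (D : V →ₗ[ℂ] W) = ⊥ := LinearMap.ker_eq_bot.mpr U.injective
    exact ⟨D, U.surjective, by rw [hD]; infer_instance⟩

section Necessity

variable {E F : Type u} [NormedAddCommGroup E] [NormedSpace ℂ E]
  [NormedAddCommGroup F] [NormedSpace ℂ F] (A : E →L[ℂ] E) (B : F →L[ℂ] F) (C : F →L[ℂ] E)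

@[simp]
theorem MC_apply (p : E × F) : MC A B C p = (A p.1 + C p.2, B p.2) := rfl

theorem mem_map_snd_ker_MC {y : F} :
    y ∈ (LinearMap.ker (MC A B C : E × F →ₗ[ℂ] E × F)).map (LinearMap.snd ℂ E F) ↔
      B y = 0 ∧ C y ∈ LinearMap.range (A : E →ₗ[ℂ] E) := by
  constructor
  · rintro ⟨⟨x, y⟩, hxy, rfl⟩
    simp only [SetLike.mem_coe, LinearMap.mem_ker, ContinuousLinearMap.coe_coe, MC_apply,
      Prod.mk_eq_zero] at hxy
    exact ⟨hxy.2, -x, by simp [eq_neg_of_add_eq_zero_right hxy.1]⟩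
  · rintro ⟨hBy, x, hx⟩
    exact ⟨(-x, y), by simp_all, rfl⟩

variable {A B C}

theorem surjective_of_surjective_MC (hs : Function.Surjective (MC A B C)) :
    Function.Surjective B := fun k =>
  let ⟨p, hp⟩ := hs (0, k)
  ⟨p.2, congrArg Prod.snd hp⟩

variable (B C) in
theorem finiteDimensional_ker_of_ker_MC
    [FiniteDimensional ℂ (LinearMap.ker (MC A B C : E × F →ₗ[ℂ] E × F))] :
    FiniteDimensional ℂ (LinearMap.ker (A : E →ₗ[ℂ] E)) := by
  refine Module.Finite.of_injective ((LinearMap.inl ℂ E F).restrict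
    (q := LinearMap.ker (MC A B C : E × F →ₗ[ℂ] E × F)) fun x hx => ?_) fun x y h => ?_
  · simp only [LinearMap.mem_ker, LinearMap.inl_apply, ContinuousLinearMap.coe_coe,
      MC_apply] at hx ⊢
    simp [hx]
  · exact Subtype.ext congr(($h : E × F).1)

theorem isClosed_range_of_surjective_MC [CompleteSpace E] [CompleteSpace F]
    (hs : Function.Surjective (MC A B C))
    [FiniteDimensional ℂ (LinearMap.ker (MC A B C : E × F →ₗ[ℂ] E × F))] :
    IsClosed (Set.range A) := by
  set N := (LinearMap.ker (MC A B C : E × F →ₗ[ℂ] E × F)).map (LinearMap.snd ℂ E F)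
  have hker : LinearMap.ker (MC A B C : E × F →ₗ[ℂ] E × F) ≤ (⊤ : Submodule ℂ E).prod N :=
    fun z hz => ⟨trivial, z, hz, rfl⟩
  have himage : MC A B C '' ((⊤ : Submodule ℂ E).prod N) = Set.range A ×ˢ {0} := by
    ext ⟨u, v⟩
    simp only [Submodule.prod_coe, Submodule.top_coe, Set.mem_image, Set.mem_prod, Set.mem_univ,
      true_and, SetLike.mem_coe, Prod.exists, MC_apply, Prod.mk.injEq, Set.mem_range,
      Set.mem_singleton_iff]
    constructor
    · rintro ⟨x, y, hy, rfl, rfl⟩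
      obtain ⟨hBy, x', hx'⟩ := (mem_map_snd_ker_MC A B C).mp hy
      exact ⟨⟨x + x', by simp_all⟩, hBy⟩
    · rintro ⟨⟨x, rfl⟩, rfl⟩
      exact ⟨x, 0, zero_mem N, by simp, by simp⟩
  have hclosed := (MC A B C).isClosed_image_of_ker_le hs
    (isClosed_univ.prod N.closed_of_finiteDimensional) hker
  rw [himage] at hclosed
  simpa using hclosed.preimage (continuous_id.prodMk continuous_const :
    Continuous fun x : E => (x, (0 : F)))

theorem betaDim_add_rank_map_snd_ker_MC (hs : Function.Surjective (MC A B C)) :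
    betaDim A + Module.rank ℂ
      ((LinearMap.ker (MC A B C : E × F →ₗ[ℂ] E × F)).map (LinearMap.snd ℂ E F)) = alphaDim B := by
  set N := (LinearMap.ker (MC A B C : E × F →ₗ[ℂ] E × F)).map (LinearMap.snd ℂ E F)
  let g := ((LinearMap.range (A : E →ₗ[ℂ] E)).mkQ ∘ₗ (C : F →ₗ[ℂ] E)).domRestrict
    (LinearMap.ker (B : F →ₗ[ℂ] F))
  have hg : Function.Surjective g := by
    intro q
    obtain ⟨h, rfl⟩ := Submodule.mkQ_surjective _ q
    obtain ⟨⟨x, y⟩, hxy⟩ := hs (h, 0)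
    simp only [MC_apply, Prod.mk.injEq] at hxy
    refine ⟨⟨y, hxy.2⟩, ?_⟩
    simp only [g, LinearMap.domRestrict_apply, LinearMap.comp_apply, Submodule.mkQ_apply,
      ContinuousLinearMap.coe_coe, Submodule.Quotient.eq]
    exact ⟨-x, by simp [← hxy.1]⟩
  have hker : LinearMap.ker g = N.comap (LinearMap.ker (B : F →ₗ[ℂ] F)).subtype := by
    ext ⟨y, hy⟩
    rw [Submodule.mem_comap, Submodule.subtype_apply, mem_map_snd_ker_MC, LinearMap.mem_ker]
    simp only [g, LinearMap.domRestrict_apply, LinearMap.comp_apply, Submodule.mkQ_apply,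
      Submodule.Quotient.mk_eq_zero, ContinuousLinearMap.coe_coe]
    exact ⟨fun h => ⟨hy, h⟩, And.right⟩
  have hN : N ≤ LinearMap.ker (B : F →ₗ[ℂ] F) := fun y hy => ((mem_map_snd_ker_MC A B C).mp hy).1
  calc betaDim A + Module.rank ℂ N
      = Module.rank ℂ (LinearMap.range g) + Module.rank ℂ (LinearMap.ker g) := by
        rw [LinearMap.range_eq_top.mpr hg, rank_top, hker,
          (Submodule.comapSubtypeEquivOfLe hN).rank_eq]
        rfl
    _ = alphaDim B := LinearMap.rank_range_add_rank_ker g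

end Necessity

section Sufficiency

variable {E F : Type u} [NormedAddCommGroup E] [NormedSpace ℂ E]
  [NormedAddCommGroup F] [InnerProductSpace ℂ F] [CompleteSpace F]
  {A : E →L[ℂ] E} {B : F →L[ℂ] F} {W : Submodule ℂ E}

def corner (B : F →L[ℂ] F) (D : LinearMap.ker (B : F →ₗ[ℂ] F) →L[ℂ] W) : F →L[ℂ] E :=
  W.subtypeL ∘L D ∘L (LinearMap.ker (B : F →ₗ[ℂ] F)).orthogonalProjectionOnto

variable (D : LinearMap.ker (B : F →ₗ[ℂ] F) →L[ℂ] W)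

theorem corner_apply_of_mem_ker {y : F} (hy : y ∈ LinearMap.ker (B : F →ₗ[ℂ] F)) :
    corner B D y = D ⟨y, hy⟩ := by
  simp [corner, Submodule.orthogonalProjectionOnto_mem_subspace_eq_self ⟨y, hy⟩]

theorem surjective_MC_corner (hB : Function.Surjective B)
    (hAW : LinearMap.range (A : E →ₗ[ℂ] E) ⊔ W = ⊤) (hD : Function.Surjective D) :
    Function.Surjective (MC A B (corner B D)) := by
  rintro ⟨h, k⟩
  obtain ⟨y, rfl⟩ := hB k
  obtain ⟨_, ⟨x, rfl⟩, w, hw, hsum⟩ :=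
    Submodule.mem_sup.mp (hAW ▸ Submodule.mem_top : h - corner B D y ∈ _)
  obtain ⟨v, hv⟩ := hD ⟨w, hw⟩
  refine ⟨(x, y + v), ?_⟩
  have hBv : B v = 0 := v.2
  have hCv : corner B D v = w := by rw [corner_apply_of_mem_ker D v.2, hv]
  simp only [MC_apply, map_add, hCv, hBv, add_zero]
  rw [← add_assoc, ← ContinuousLinearMap.coe_coe A, add_right_comm, hsum, sub_add_cancel]

theorem ker_MC_corner_le (hAW : Disjoint (LinearMap.range (A : E →ₗ[ℂ] E)) W) :
    LinearMap.ker (MC A B (corner B D) : E × F →ₗ[ℂ] E × F) ≤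
      LinearMap.range ((LinearMap.ker (A : E →ₗ[ℂ] E)).subtype.prodMap
        ((LinearMap.ker (B : F →ₗ[ℂ] F)).subtype ∘ₗ (LinearMap.ker (D : _ →ₗ[ℂ] W)).subtype)) := by
  rintro ⟨x, y⟩ hxy
  simp only [LinearMap.mem_ker, ContinuousLinearMap.coe_coe, MC_apply, Prod.mk_eq_zero] at hxy
  obtain ⟨hsum, hy⟩ := hxy
  have hAx : A x = 0 := by
    refine Submodule.disjoint_def.mp hAW _ ⟨x, rfl⟩ ?_
    rw [eq_neg_of_add_eq_zero_left hsum]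
    exact W.neg_mem (D _).2
  have hDy : D ⟨y, hy⟩ = 0 := by
    rw [← Subtype.coe_inj, ← corner_apply_of_mem_ker D hy]
    simpa [hAx] using hsum
  exact ⟨(⟨x, hAx⟩, ⟨⟨y, hy⟩, hDy⟩), rfl⟩

end Sufficiency

theorem exists_MC_surjective_finiteDimensional_ker [SeparableSpace H] [SeparableSpace K]
    {A : H →L[ℂ] H} {B : K →L[ℂ] K} (hB : Function.Surjective B)
    (hA : FiniteDimensional ℂ (LinearMap.ker (A : H →ₗ[ℂ] H))) (hAc : IsClosed (Set.range A))
    (hd : (betaDim A ≤ alphaDim B ∧ alphaDim B < ℵ₀) ∨ (ℵ₀ ≤ alphaDim B ∧ ℵ₀ ≤ betaDim A)) :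
    ∃ C : K →L[ℂ] H, Function.Surjective (MC A B C) ∧
      FiniteDimensional ℂ (LinearMap.ker (MC A B C : H × K →ₗ[ℂ] H × K)) := by
  have : CompleteSpace (LinearMap.range (A : H →ₗ[ℂ] H)) :=
    (show IsClosed (LinearMap.range (A : H →ₗ[ℂ] H) : Set H) by
      rwa [LinearMap.coe_range]).completeSpace_coe
  have hcompl := (LinearMap.range (A : H →ₗ[ℂ] H)).isCompl_orthogonal
  rw [betaDim, (Submodule.quotientEquivOfIsCompl _ _ hcompl).rank_eq] at hd
  obtain ⟨D, hD, hDker⟩ := exists_surjective_finiteDimensional_ker hd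
  exact ⟨corner B D, surjective_MC_corner D hB hcompl.sup_eq_top hD,
    Submodule.finiteDimensional_of_le (ker_MC_corner_le D hcompl.disjoint)⟩

theorem stmt_12_general
  [TopologicalSpace.SeparableSpace H] [TopologicalSpace.SeparableSpace K]
    (A : H →L[ℂ] H) (B : K →L[ℂ] K) :
    (∃ C : K →L[ℂ] H, Function.Surjective (MC A B C) ∧ alphaDim (MC A B C) < ℵ₀) ↔
      Function.Surjective B ∧ (alphaDim A < ℵ₀ ∧ IsClosed (Set.range A)) ∧
        ((betaDim A ≤ alphaDim B ∧ alphaDim B < ℵ₀) ∨ (ℵ₀ ≤ alphaDim B ∧ ℵ₀ ≤ betaDim A)) := by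
  constructor
  · rintro ⟨C, hs, hk⟩
    have := (alphaDim_lt_aleph0_iff _).mp hk
    exact ⟨surjective_of_surjective_MC hs,
      ⟨(alphaDim_lt_aleph0_iff A).mpr (finiteDimensional_ker_of_ker_MC B C),
        isClosed_range_of_surjective_MC hs⟩,
      Cardinal.le_and_lt_aleph0_or_aleph0_le_of_add_eq (betaDim_add_rank_map_snd_ker_MC hs)
        (Module.rank_lt_aleph0 ℂ _)⟩
  · rintro ⟨hB, ⟨hA, hAc⟩, hd⟩
    obtain ⟨C, hs, hk⟩ :=
      exists_MC_surjective_finiteDimensional_ker hB ((alphaDim_lt_aleph0_iff A).mp hA) hAc hd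
    exact ⟨C, hs, (alphaDim_lt_aleph0_iff _).mpr hk⟩

theorem stmt_12
  [TopologicalSpace.SeparableSpace H] [TopologicalSpace.SeparableSpace K]
    (hH : ¬ FiniteDimensional ℂ H) (hK : ¬ FiniteDimensional ℂ K)
    (A : H →L[ℂ] H) (B : K →L[ℂ] K) :
    (∃ C : K →L[ℂ] H, Function.Surjective (MC A B C) ∧ alphaDim (MC A B C) < ℵ₀) ↔
      Function.Surjective B ∧ (alphaDim A < ℵ₀ ∧ IsClosed (Set.range A)) ∧
        ((betaDim A ≤ alphaDim B ∧ alphaDim B < ℵ₀) ∨ (ℵ₀ ≤ alphaDim B ∧ ℵ₀ ≤ betaDim A)) :=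
  stmt_12_general A B
end
end

section
/- For every C, the FLI spectrum of A minus the set (σ_d(A) ∩ σ_l(B)) is contained in the FLI spectrum of M_C, which is in turn contained in σ_FLI(A) ∪ σ_FLI(B). Here σ_FLI(T) = {λ : T − λ is not injective with finite-codimensional range}, σ_d(A) = {λ : A − λ not surjective}, σ_l(B) = {λ : B − λ not left invertible}. -/
open ContinuousLinearMap Cardinal

noncomputable section

universe u

/-!
Write `T_λ = T - λ`; then `(M_C)_λ = M_C(A_λ, B_λ)`. Injectivity of `M_C` forces injectivity of `A`,
and `A`, `B` injective give `M_C` injective. For cokernels: if `F_A`, `F_B` complement the ranges of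
`A`, `B`, then `range M_C + F_A × F_B` is everything, so `β(M_C) ≤ β(A) + β(B)`. If `B` is injective,
`range A` is the preimage of `range M_C` under `x ↦ (x, 0)`, so `H / range A` embeds in the cokernel
of `M_C` and `β(A) ≤ β(M_C)`; if instead `A` is surjective then `β(A) = 0`.
-/

universe v

namespace Submodule

variable {R : Type*} {V W : Type v} [Ring R] [AddCommGroup V] [Module R V] [AddCommGroup W] [Module R W]

theorem rank_quotient_le_of_sup_eq_top {p q : Submodule R V} (h : p ⊔ q = ⊤) :
    Module.rank R (V ⧸ p) ≤ Module.rank R q := by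
  refine (p.mkQ.comp q.subtype).rank_le_of_surjective ?_
  rw [← LinearMap.range_eq_top, LinearMap.range_comp, range_subtype, map_mkQ_eq_top, h]

theorem rank_quotient_comap_le (f : V →ₗ[R] W) (p : Submodule R W) :
    Module.rank R (V ⧸ p.comap f) ≤ Module.rank R (W ⧸ p) := by
  have hker : LinearMap.ker (p.mkQ ∘ₗ f) = p.comap f := by
    rw [LinearMap.ker_comp, ker_mkQ]
  rw [← hker, (p.mkQ ∘ₗ f).quotKerEquivRange.rank_eq]
  exact rank_le _

end Submodule

section UpperTriangular

variable {H K : Type u} [NormedAddCommGroup H] [NormedSpace ℂ H]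
    [NormedAddCommGroup K] [NormedSpace ℂ K]
    (A : H →L[ℂ] H) (B : K →L[ℂ] K) (C : K →L[ℂ] H)

@[simp] theorem MC_apply_s16 (x : H) (y : K) : MC A B C (x, y) = (A x + C y, B y) := rfl

theorem shf_MC (l : ℂ) : shf (MC A B C) l = MC (shf A l) (shf B l) C := by
  refine ContinuousLinearMap.ext fun ⟨x, y⟩ => ?_
  simp only [shf, sub_apply, smul_apply, id_apply, MC_apply_s16, Prod.smul_mk, Prod.mk_sub_mk]
  congr 1
  abel

variable {A B C}

theorem injective_of_injective_MC (h : Function.Injective (MC A B C)) : Function.Injective A :=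
  fun x x' hx => congrArg Prod.fst (@h (x, 0) (x', 0) (by simp [hx]))

theorem injective_MC (hA : Function.Injective A) (hB : Function.Injective B) :
    Function.Injective (MC A B C) := by
  rintro ⟨x, y⟩ ⟨x', y'⟩ h
  simp only [MC_apply_s16, Prod.mk.injEq] at h
  obtain rfl : y = y' := hB h.2
  obtain rfl : x = x' := hA (add_right_cancel h.1)
  rfl

theorem range_MC_sup_prod_eq_top {Fa : Submodule ℂ H} {Fb : Submodule ℂ K}
    (hA : LinearMap.range (A : H →ₗ[ℂ] H) ⊔ Fa = ⊤)
    (hB : LinearMap.range (B : K →ₗ[ℂ] K) ⊔ Fb = ⊤) :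
    LinearMap.range (MC A B C : (H × K) →ₗ[ℂ] (H × K)) ⊔ Fa.prod Fb = ⊤ := by
  rw [Submodule.eq_top_iff']
  rintro ⟨x, y⟩
  obtain ⟨_, ⟨k, rfl⟩, fb, hfb, hy⟩ := Submodule.mem_sup.mp (hB ▸ Submodule.mem_top (x := y))
  obtain ⟨_, ⟨w, rfl⟩, fa, hfa, hx⟩ :=
    Submodule.mem_sup.mp (hA ▸ Submodule.mem_top (x := x - C k))
  refine Submodule.mem_sup.mpr ⟨MC A B C (w, k), ⟨(w, k), rfl⟩, (fa, fb), ⟨hfa, hfb⟩, ?_⟩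
  simp only [ContinuousLinearMap.coe_coe] at hx hy
  simp only [MC_apply_s16, Prod.mk_add_mk, hy, Prod.mk.injEq, and_true]
  rw [add_right_comm, hx, sub_add_cancel]

theorem betaDim_MC_le : betaDim (MC A B C) ≤ betaDim A + betaDim B := by
  obtain ⟨Fa, hFa⟩ := (LinearMap.range (A : H →ₗ[ℂ] H)).exists_isCompl
  obtain ⟨Fb, hFb⟩ := (LinearMap.range (B : K →ₗ[ℂ] K)).exists_isCompl
  have hprod : Fa.prod Fb = LinearMap.range (Fa.subtype.prodMap Fb.subtype) := by
    simp [LinearMap.range_prodMap]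
  calc betaDim (MC A B C) ≤ Module.rank ℂ (Fa.prod Fb) :=
        Submodule.rank_quotient_le_of_sup_eq_top
          (range_MC_sup_prod_eq_top hFa.sup_eq_top hFb.sup_eq_top)
    _ ≤ Module.rank ℂ (Fa × Fb) := hprod ▸ rank_range_le _
    _ = betaDim A + betaDim B := by
        rw [rank_prod', ← (Submodule.quotientEquivOfIsCompl _ _ hFa).rank_eq,
          ← (Submodule.quotientEquivOfIsCompl _ _ hFb).rank_eq]
        rfl

theorem comap_inl_range_MC (hB : Function.Injective B) :
    (LinearMap.range (MC A B C : (H × K) →ₗ[ℂ] (H × K))).comap (LinearMap.inl ℂ H K) =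
      LinearMap.range (A : H →ₗ[ℂ] H) := by
  ext x
  simp only [Submodule.mem_comap, LinearMap.mem_range, LinearMap.inl_apply,
    ContinuousLinearMap.coe_coe, Prod.exists, MC_apply_s16, Prod.mk.injEq]
  constructor
  · rintro ⟨w, k, hx, hk⟩
    obtain rfl : k = 0 := hB (hk.trans B.map_zero.symm)
    exact ⟨w, by simpa using hx⟩
  · rintro ⟨w, rfl⟩
    exact ⟨w, 0, by simp⟩

theorem betaDim_le_betaDim_MC (hB : Function.Injective B) : betaDim A ≤ betaDim (MC A B C) := by
  unfold betaDim
  rw [← comap_inl_range_MC (C := C) hB]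
  exact Submodule.rank_quotient_comap_le _ _

end UpperTriangular

theorem betaDim_eq_zero_of_surjective {E F : Type u} [NormedAddCommGroup E] [NormedSpace ℂ E]
    [NormedAddCommGroup F] [NormedSpace ℂ F] {T : E →L[ℂ] F} (hT : Function.Surjective T) :
    betaDim T = 0 := by
  have : Subsingleton (F ⧸ LinearMap.range (T : E →ₗ[ℂ] F)) := by
    rw [LinearMap.range_eq_top.mpr hT]
    infer_instance
  exact rank_subsingleton' _ _

variable {H K : Type u}
  [NormedAddCommGroup H] [InnerProductSpace ℂ H] [CompleteSpace H]
  [NormedAddCommGroup K] [InnerProductSpace ℂ K] [CompleteSpace K]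

theorem stmt_16 (A : H →L[ℂ] H) (B : K →L[ℂ] K) (C : K →L[ℂ] H) :
    sigmaFLI A \ ({l : ℂ | ¬ Function.Surjective (shf A l)} ∩
        {l : ℂ | ¬ (Function.Injective (shf B l) ∧ IsClosed (Set.range (shf B l)))})
      ⊆ sigmaFLI (MC A B C) ∧
    sigmaFLI (MC A B C) ⊆ sigmaFLI A ∪ sigmaFLI B := by
  simp only [Set.subset_def, Set.mem_sdiff, Set.mem_union, sigmaFLI, Set.mem_inter_iff,
    Set.mem_ofPred_eq, shf_MC]
  constructor
  · rintro l ⟨hA, hAB⟩ ⟨hMi, hMb⟩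
    refine hA ⟨injective_of_injective_MC hMi, ?_⟩
    by_cases hsurj : Function.Surjective (shf A l)
    · rw [betaDim_eq_zero_of_surjective hsurj]
      exact aleph0_pos
    · have hBi : Function.Injective (shf B l) := by
        by_contra hBi
        exact hAB ⟨hsurj, fun h => hBi h.1⟩
      exact (betaDim_le_betaDim_MC hBi).trans_lt hMb
  · intro l hM
    by_contra! hAB
    obtain ⟨⟨hAi, hAb⟩, hBi, hBb⟩ := hAB
    exact hM ⟨injective_MC hAi hBi, betaDim_MC_le.trans_lt (add_lt_aleph0 hAb hBb)⟩
end
end
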